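/- Let g : ℂ × ℂ → ℝ be continuous, with |g(z, w)| ≤ B for all (z, w) and |g(z, w) − g(z, w')| ≤ L·|w − w'| for all z, w, w'. Then z ↦ log(|z|²)·g(z, 0) is integrable on {z ∈ ℂ : 0 < |z| ≤ 1}, and there is a constant C (depending only on B and L) such that for every t ∈ ℂ with 0 < |t| < 1, the function z ↦ log(|z|²)·g(z, t/z) is integrable on the annulus {z : |t|^{1/2} ≤ |z| ≤ 1} and | ∫_{|t|^{1/2} ≤ |z| ≤ 1} log(|z|²) g(z, t/z) dA(z) − ∫_{0 < |z| ≤ 1} log(|z|²) g(z, 0) dA(z) | ≤ C · |t| · (1 + |log |t||). -/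

import Mathlib

open MeasureTheory Set Metric

lemma subtype_integrable_iff {α : Type*} [MeasurableSpace α] (μ : Measure α) {s : Set α}
    (hs : MeasurableSet s) (F : α → ℝ) :
    Integrable (fun r : s => F r.1) (Measure.comap Subtype.val μ) ↔
      IntegrableOn F s μ := by
  rw [IntegrableOn, ← map_comap_subtype_coe hs,
    (MeasurableEmbedding.subtype_coe hs).integrable_map_iff]
  rfl

lemma radial_integrable {f : ℝ → ℝ}
    (hf : IntegrableOn (fun y => y * f y) (Set.Ioi 0) volume) :
    Integrable (fun z : ℂ => f (‖z‖)) volume := by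
  have h5 : Integrable (fun r : Set.Ioi (0:ℝ) => f r.1) (Measure.volumeIoiPow 1) := by
    rw [Measure.volumeIoiPow, integrable_withDensity_iff (by fun_prop)
      (Filter.Eventually.of_forall fun x => ENNReal.ofReal_lt_top)]
    have : (fun r : Set.Ioi (0:ℝ) => f r.1 * (ENNReal.ofReal (r.1 ^ 1)).toReal)
        = fun r : Set.Ioi (0:ℝ) => (fun y => y * f y) r.1 := by
      funext r
      simp [ENNReal.toReal_ofReal r.2.out.le, mul_comm]
    rw [this]
    exact (subtype_integrable_iff volume measurableSet_Ioi (fun y => y * f y)).mpr hf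
  have h4 : Integrable (fun x : sphere (0:ℂ) 1 × Set.Ioi (0:ℝ) => f x.2.1)
      ((volume : Measure ℂ).toSphere.prod (Measure.volumeIoiPow 1)) := by
    have := (integrable_const (c := (1:ℝ)) (μ := (volume : Measure ℂ).toSphere)).mul_prod h5
    simpa using this
  have hdim : Module.finrank ℝ ℂ - 1 = 1 := by
    rw [Complex.finrank_real_complex]
  rw [← hdim] at h4
  have h3 : Integrable (fun x : ({0}ᶜ : Set ℂ) => f ‖x.1‖)
      (Measure.comap Subtype.val volume) := by
    have := ((Measure.measurePreserving_homeomorphUnitSphereProd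
      (volume : Measure ℂ)).integrable_comp_emb
      (Homeomorph.measurableEmbedding _) (g := fun x : sphere (0:ℂ) 1 × Set.Ioi (0:ℝ) =>
        f x.2.1)).mpr h4
    simpa [Function.comp_def] using this
  have h2 : IntegrableOn (fun z : ℂ => f ‖z‖) ({0}ᶜ : Set ℂ) volume :=
    (subtype_integrable_iff volume (measurableSet_singleton (0:ℂ)).compl _).mp h3
  rw [IntegrableOn, MeasureTheory.restrict_compl_singleton] at h2
  simpa using h2

lemma radial_integral (f : ℝ → ℝ) :
    ∫ z : ℂ, f (‖z‖) = (2 * Real.pi) * ∫ y in Set.Ioi (0:ℝ), y * f y := by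
  have : ∫ z : ℂ, f ‖z‖ = (2 * Real.pi) * ∫ y in Set.Ioi (0:ℝ), y * f y := by
    rw [integral_fun_norm_addHaar (volume : Measure ℂ) f]
    simp only [Complex.finrank_real_complex, Complex.volume_ball]
    rw [show ((2:ℕ) - 1) = 1 by rfl]
    simp [smul_eq_mul, mul_assoc, ENNReal.toReal_mul, measureReal_def]
  simpa using this

lemma mul_neg_log_le_one {y : ℝ} (hy : 0 < y) : y * (-Real.log y) ≤ 1 := by
  have h := Real.log_le_sub_one_of_pos (inv_pos.2 hy)
  rw [Real.log_inv] at h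
  have h2 : -Real.log y ≤ y⁻¹ := by linarith
  calc y * (-Real.log y) ≤ y * y⁻¹ := mul_le_mul_of_nonneg_left h2 hy.le
  _ = 1 := mul_inv_cancel₀ hy.ne'

lemma mul_neg_log_le {y s : ℝ} (hy : 0 < y) (hys : y ≤ s) (hs1 : s ≤ 1) :
    y * (-Real.log y) ≤ s * (-Real.log s) + s := by
  have hs0 : 0 < s := lt_of_lt_of_le hy hys
  have h1 : Real.log (s / y) ≤ s / y - 1 := Real.log_le_sub_one_of_pos (div_pos hs0 hy)
  have h2 : y * Real.log (s / y) ≤ s - y := by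
    calc y * Real.log (s / y) ≤ y * (s / y - 1) := mul_le_mul_of_nonneg_left h1 hy.le
    _ = s - y := by field_simp
  have h3 : (0:ℝ) ≤ -Real.log s := by
    have : Real.log s ≤ 0 := Real.log_nonpos hs0.le hs1
    linarith
  have h4 : y * (-Real.log s) ≤ s * (-Real.log s) := mul_le_mul_of_nonneg_right hys h3
  have h5 : Real.log (s / y) = Real.log s - Real.log y := Real.log_div hs0.ne' hy.ne'
  have h6 : y * Real.log (s / y) = y * Real.log s - y * Real.log y := by rw [h5]; ring
  nlinarith

lemma radial_piece {a b M : ℝ} {u : Set ℝ} (hu : MeasurableSet u) (hub : u ⊆ Icc a b)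
    (hab : a ≤ b) (hM : 0 ≤ M)
    {F : ℝ → ℝ} (hFm : Measurable F) (hbd : ∀ y ∈ u, |y * F y| ≤ M) :
    IntegrableOn (fun y => y * u.indicator F y) (Set.Ioi 0) volume ∧
    ∫ y in Set.Ioi (0:ℝ), y * u.indicator F y ≤ M * (b - a) := by
  have hind : (fun y => y * u.indicator F y) = u.indicator (fun y => y * F y) := by
    funext y
    by_cases h : y ∈ u <;> simp [h]
  have hfin : (volume.restrict (Set.Ioi 0)) u < ⊤ := by
    calc (volume.restrict (Set.Ioi 0)) u ≤ volume u := Measure.restrict_le_self u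
    _ ≤ volume (Icc a b) := measure_mono hub
    _ < ⊤ := measure_Icc_lt_top
  have hgint : Integrable (u.indicator (fun _ => M)) (volume.restrict (Set.Ioi 0)) :=
    (integrable_indicator_iff hu).2 (integrableOn_const hfin.ne)
  have hmint : Integrable (u.indicator (fun y => y * F y)) (volume.restrict (Set.Ioi 0)) := by
    refine hgint.mono' ((measurable_id.mul hFm).indicator hu).aestronglyMeasurable ?_
    refine Filter.Eventually.of_forall fun y => ?_
    by_cases h : y ∈ u
    · simpa [h, Real.norm_eq_abs, abs_mul] using hbd y h
    · simp [h]
  constructor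
  · rw [IntegrableOn, hind]; exact hmint
  · rw [hind]
    calc ∫ y in Set.Ioi (0:ℝ), u.indicator (fun y => y * F y) y
        ≤ ∫ y in Set.Ioi (0:ℝ), u.indicator (fun _ => M) y := by
          refine integral_mono hmint hgint fun y => ?_
          by_cases h : y ∈ u
          · simpa [h] using le_trans (le_abs_self _) (hbd y h)
          · simp [h]
      _ = ((volume.restrict (Set.Ioi 0)) u).toReal * M := by
          rw [integral_indicator hu, setIntegral_const, smul_eq_mul, measureReal_def]
      _ ≤ (b - a) * M := by
          refine mul_le_mul_of_nonneg_right ?_ hM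
          refine ENNReal.toReal_le_of_le_ofReal (sub_nonneg.2 hab) ?_
          calc (volume.restrict (Set.Ioi 0)) u ≤ volume (Icc a b) :=
            le_trans (Measure.restrict_le_self u) (measure_mono hub)
          _ = ENNReal.ofReal (b - a) := Real.volume_Icc
      _ = M * (b - a) := mul_comm _ _

set_option maxHeartbeats 2000000 in
/-- Key analytic estimate in the nodal chart: for `g` continuous, bounded by `B`, and
Lipschitz in the second variable with constant `L`, the log-weighted integral of
`z ↦ g (z, t / z)` over the annulus `{√|t| ≤ |z| ≤ 1}` converges, as `t → 0`, to the
log-weighted integral of `z ↦ g (z, 0)` over the punctured disk, with error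
`O(|t| (1 + |log |t||))`. -/
theorem nodal_log_integral_estimate
    (g : ℂ × ℂ → ℝ) (B L : ℝ)
    (hg : Continuous g)
    (hB : ∀ z w : ℂ, |g (z, w)| ≤ B)
    (hL : ∀ z w w' : ℂ, |g (z, w) - g (z, w')| ≤ L * ‖w - w'‖) :
    IntegrableOn (fun z : ℂ => Real.log (‖z‖ ^ 2) * g (z, 0))
      {z : ℂ | 0 < ‖z‖ ∧ ‖z‖ ≤ 1} volume ∧
    ∃ C : ℝ, ∀ t : ℂ, 0 < ‖t‖ → ‖t‖ < 1 →
      IntegrableOn (fun z : ℂ => Real.log (‖z‖ ^ 2) * g (z, t / z))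
        {z : ℂ | Real.sqrt (‖t‖) ≤ ‖z‖ ∧ ‖z‖ ≤ 1} volume ∧
      |(∫ z in {z : ℂ | Real.sqrt (‖t‖) ≤ ‖z‖ ∧ ‖z‖ ≤ 1},
          Real.log (‖z‖ ^ 2) * g (z, t / z)) -
        ∫ z in {z : ℂ | 0 < ‖z‖ ∧ ‖z‖ ≤ 1},
          Real.log (‖z‖ ^ 2) * g (z, 0)| ≤
        C * ‖t‖ * (1 + |Real.log (‖t‖)|) := by
  have hB0 : 0 ≤ B := le_trans (abs_nonneg _) (hB 0 0)
  have hL0 : 0 ≤ L := by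
    have h := hL 0 0 1
    simpa using le_trans (abs_nonneg _) h
  have hlogm : Measurable fun y : ℝ => |Real.log (y ^ 2)| :=
    (Real.measurable_log.comp (measurable_id.pow_const 2)).abs
  -- basic log bounds
  have hlogabs : ∀ y : ℝ, 0 < y → y ≤ 1 → |Real.log (y ^ 2)| = 2 * (-Real.log y) := by
    intro y hy hy1
    rw [Real.log_pow]
    rw [abs_of_nonpos (by
      have := Real.log_nonpos hy.le hy1
      push_cast
      nlinarith)]
    push_cast
    ring
  -- continuity of the log factor off 0
  have hlogcont : ∀ z : ℂ, z ≠ 0 →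
      ContinuousAt (fun w : ℂ => Real.log (‖w‖ ^ 2)) z := by
    intro z hz
    have h2 : ContinuousAt (fun w : ℂ => ‖w‖ ^ 2) z :=
      (continuous_norm.continuousAt).pow 2
    exact h2.log (pow_ne_zero 2 (norm_ne_zero_iff.mpr hz))
  have hDm : MeasurableSet {z : ℂ | 0 < ‖z‖ ∧ ‖z‖ ≤ 1} :=
    continuous_norm.measurable measurableSet_Ioc
  -- Part 1: integrability on the punctured disk
  have hbd0 : ∀ y ∈ Set.Ioc (0:ℝ) 1, |y * (B * |Real.log (y ^ 2)|)| ≤ 2 * B := by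
    intro y hy
    rw [abs_of_nonneg (mul_nonneg hy.1.le (mul_nonneg hB0 (abs_nonneg _))), hlogabs y hy.1 hy.2]
    nlinarith [mul_neg_log_le_one hy.1, Real.log_nonpos hy.1.le hy.2, hy.1.le]
  have hf0 := radial_piece (a := 0) (b := 1) (M := 2 * B) measurableSet_Ioc Ioc_subset_Icc_self
    zero_le_one (by linarith) (hlogm.const_mul B) hbd0
  have hPhi0 : Integrable (fun z : ℂ =>
      (Set.Ioc (0:ℝ) 1).indicator (fun y => B * |Real.log (y ^ 2)|) (‖z‖)) volume :=
    radial_integrable hf0.1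
  have part1 : IntegrableOn (fun z : ℂ => Real.log (‖z‖ ^ 2) * g (z, 0))
      {z : ℂ | 0 < ‖z‖ ∧ ‖z‖ ≤ 1} volume := by
    refine Integrable.mono' hPhi0.integrableOn ?_ ?_
    · refine ContinuousOn.aestronglyMeasurable (fun z hz => ?_) hDm
      have hz0 : z ≠ 0 := norm_ne_zero_iff.mp hz.1.ne'
      exact ((hlogcont z hz0).mul ((hg.comp
        (continuous_id.prodMk continuous_const)).continuousAt)).continuousWithinAt
    · filter_upwards [ae_restrict_mem hDm] with z hz
      have hmem : ‖z‖ ∈ Set.Ioc (0:ℝ) 1 := ⟨hz.1, hz.2⟩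
      rw [Set.indicator_of_mem hmem, Real.norm_eq_abs, abs_mul]
      calc |Real.log (‖z‖ ^ 2)| * |g (z, 0)|
          ≤ |Real.log (‖z‖ ^ 2)| * B :=
            mul_le_mul_of_nonneg_left (hB z 0) (abs_nonneg _)
        _ = B * |Real.log (‖z‖ ^ 2)| := mul_comm _ _
  refine ⟨part1, 2 * Real.pi * L + 4 * Real.pi * B, fun t ht0 ht1 => ?_⟩
  set s := Real.sqrt (‖t‖) with hsdef
  have hs0 : 0 < s := Real.sqrt_pos.2 ht0
  have hs1 : s ≤ 1 := Real.sqrt_le_one.mpr ht1.le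
  have hss : s ^ 2 = ‖t‖ := Real.sq_sqrt (norm_nonneg t)
  have hlogT : Real.log (‖t‖) < 0 := Real.log_neg ht0 ht1
  have habsT : |Real.log (‖t‖)| = -Real.log (‖t‖) := abs_of_neg hlogT
  have hnegs : -Real.log s = |Real.log (‖t‖)| / 2 := by
    rw [hsdef, Real.log_sqrt (norm_nonneg t), habsT]
    ring
  set R := |Real.log (‖t‖)| with hRdef
  have hR0 : 0 ≤ R := abs_nonneg _
  set A := {z : ℂ | s ≤ ‖z‖ ∧ ‖z‖ ≤ 1} with hAdef
  have hAm : MeasurableSet A := continuous_norm.measurable measurableSet_Icc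
  have hAD : A ⊆ {z : ℂ | 0 < ‖z‖ ∧ ‖z‖ ≤ 1} :=
    fun z hz => ⟨lt_of_lt_of_le hs0 hz.1, hz.2⟩
  have hAc : IsCompact A := by
    refine Metric.isCompact_of_isClosed_isBounded
      (IsClosed.preimage continuous_norm isClosed_Icc) ?_
    refine (Metric.isBounded_closedBall (x := (0:ℂ)) (r := 1)).subset ?_
    intro z hz
    simpa [Metric.mem_closedBall, Complex.dist_eq] using hz.2
  -- integrability on the annulus
  have hhtA : IntegrableOn (fun z : ℂ => Real.log (‖z‖ ^ 2) * g (z, t / z)) A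
      volume := by
    refine ContinuousOn.integrableOn_compact hAc ?_
    intro z hz
    have hz0 : z ≠ 0 := norm_ne_zero_iff.mp (lt_of_lt_of_le hs0 hz.1).ne'
    have h2 : ContinuousAt (fun w : ℂ => g (w, t / w)) z := by
      have hpair : ContinuousAt (fun w : ℂ => ((w, t / w) : ℂ × ℂ)) z :=
        continuousAt_id.prodMk (continuousAt_const.div continuousAt_id hz0)
      exact (hg.continuousAt).comp hpair
    exact ((hlogcont z hz0).mul h2).continuousWithinAt
  set S := {z : ℂ | 0 < ‖z‖ ∧ ‖z‖ < s} with hSdef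
  have hSm : MeasurableSet S := continuous_norm.measurable measurableSet_Ioo
  have hsplit : {z : ℂ | 0 < ‖z‖ ∧ ‖z‖ ≤ 1} = A ∪ S := by
    ext z
    simp only [Set.mem_setOf_eq, Set.mem_union, hAdef, hSdef]
    constructor
    · rintro ⟨h1, h2⟩
      by_cases h : s ≤ ‖z‖
      · exact Or.inl ⟨h, h2⟩
      · exact Or.inr ⟨h1, lt_of_not_ge h⟩
    · rintro (⟨h1, h2⟩ | ⟨h1, h2⟩)
      · exact ⟨lt_of_lt_of_le hs0 h1, h2⟩
      · exact ⟨h1, le_trans h2.le hs1⟩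
  have hdisj : Disjoint A S := by
    rw [Set.disjoint_left]
    rintro z ⟨h1, _⟩ ⟨_, h2⟩
    exact absurd h2 (not_lt.2 h1)
  have hh0A := part1.mono_set hAD
  have hh0S := part1.mono_set
    (show S ⊆ _ from fun z hz => ⟨hz.1, le_trans hz.2.le hs1⟩)
  have heq : (∫ z in {z : ℂ | 0 < ‖z‖ ∧ ‖z‖ ≤ 1},
      Real.log (‖z‖ ^ 2) * g (z, 0)) =
      (∫ z in A, Real.log (‖z‖ ^ 2) * g (z, 0)) +
      ∫ z in S, Real.log (‖z‖ ^ 2) * g (z, 0) := by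
    rw [hsplit]
    exact setIntegral_union hdisj hSm hh0A hh0S
  -- radial piece 1
  have hbd1 : ∀ y ∈ Set.Icc s 1,
      |y * (|Real.log (y ^ 2)| * (L * ‖t‖ / y))| ≤ R * (L * ‖t‖) := by
    intro y hy
    have hy0 : 0 < y := lt_of_lt_of_le hs0 hy.1
    have hkey : y * (|Real.log (y ^ 2)| * (L * ‖t‖ / y)) =
        |Real.log (y ^ 2)| * (L * ‖t‖) := by
      field_simp
    rw [abs_of_nonneg (mul_nonneg hy0.le (mul_nonneg (abs_nonneg _)
      (div_nonneg (mul_nonneg hL0 (norm_nonneg t)) hy0.le))), hkey]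
    refine mul_le_mul_of_nonneg_right ?_ (mul_nonneg hL0 (norm_nonneg t))
    rw [hlogabs y hy0 hy.2]
    have hls : Real.log s ≤ Real.log y := Real.log_le_log hs0 hy.1
    linarith [hnegs]
  have hf1 := radial_piece (a := s) (b := 1) measurableSet_Icc (subset_refl _) hs1
    (mul_nonneg hR0 (mul_nonneg hL0 (norm_nonneg t)))
    (hlogm.mul (measurable_const.div measurable_id)) hbd1
  have hPhi1 : Integrable (fun z : ℂ => (Set.Icc s 1).indicator
      (fun y => |Real.log (y ^ 2)| * (L * ‖t‖ / y)) (‖z‖)) volume :=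
    radial_integrable hf1.1
  -- radial piece 2
  have hM2 : 0 ≤ 2 * B * (s * (-Real.log s) + s) := by
    have h1 : 0 ≤ -Real.log s := by rw [hnegs]; positivity
    have h2 : 0 ≤ s * (-Real.log s) + s := by nlinarith
    nlinarith
  have hbd2 : ∀ y ∈ Set.Ioc (0:ℝ) s, |y * (B * |Real.log (y ^ 2)|)| ≤
      2 * B * (s * (-Real.log s) + s) := by
    intro y hy
    rw [abs_of_nonneg (mul_nonneg hy.1.le (mul_nonneg hB0 (abs_nonneg _))),
      hlogabs y hy.1 (le_trans hy.2 hs1)]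
    have h := mul_neg_log_le hy.1 hy.2 hs1
    have h2 := mul_le_mul_of_nonneg_left h hB0
    nlinarith
  have hf2 := radial_piece (a := 0) (b := s) measurableSet_Ioc Ioc_subset_Icc_self hs0.le hM2
    (hlogm.const_mul B) hbd2
  have hPhi2 : Integrable (fun z : ℂ => (Set.Ioc (0:ℝ) s).indicator
      (fun y => B * |Real.log (y ^ 2)|) (‖z‖)) volume :=
    radial_integrable hf2.1
  refine ⟨hhtA, ?_⟩
  rw [heq]
  have hdiff : (∫ z in A, Real.log (‖z‖ ^ 2) * g (z, t / z)) -
      ((∫ z in A, Real.log (‖z‖ ^ 2) * g (z, 0)) +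
        ∫ z in S, Real.log (‖z‖ ^ 2) * g (z, 0)) =
      (∫ z in A, (Real.log (‖z‖ ^ 2) * g (z, t / z) -
        Real.log (‖z‖ ^ 2) * g (z, 0))) -
      ∫ z in S, Real.log (‖z‖ ^ 2) * g (z, 0) := by
    rw [integral_sub hhtA hh0A]
    ring
  rw [hdiff]
  -- bound the first term
  have hXle : |∫ z in A, (Real.log (‖z‖ ^ 2) * g (z, t / z) -
      Real.log (‖z‖ ^ 2) * g (z, 0))| ≤
      2 * Real.pi * (R * (L * ‖t‖) * (1 - s)) := by
    calc |∫ z in A, (Real.log (‖z‖ ^ 2) * g (z, t / z) -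
        Real.log (‖z‖ ^ 2) * g (z, 0))|
        ≤ ∫ z in A, |Real.log (‖z‖ ^ 2) * g (z, t / z) -
            Real.log (‖z‖ ^ 2) * g (z, 0)| := by
          simpa only [Real.norm_eq_abs] using norm_integral_le_integral_norm
            (μ := volume.restrict A) (fun z : ℂ => Real.log (‖z‖ ^ 2) * g (z, t / z) -
              Real.log (‖z‖ ^ 2) * g (z, 0))
      _ ≤ ∫ z in A, (Set.Icc s 1).indicator
            (fun y => |Real.log (y ^ 2)| * (L * ‖t‖ / y)) (‖z‖) := by
          refine setIntegral_mono_on ((hhtA.sub hh0A).abs) hPhi1.integrableOn hAm ?_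
          intro z hz
          have hmem : ‖z‖ ∈ Set.Icc s 1 := ⟨hz.1, hz.2⟩
          rw [Set.indicator_of_mem hmem]
          have hre : Real.log (‖z‖ ^ 2) * g (z, t / z) -
              Real.log (‖z‖ ^ 2) * g (z, 0) =
              Real.log (‖z‖ ^ 2) * (g (z, t / z) - g (z, 0)) := by ring
          rw [hre, abs_mul]
          have hgd : |g (z, t / z) - g (z, 0)| ≤ L * (‖t‖ / ‖z‖) := by
            have h := hL z (t / z) 0
            rwa [sub_zero, norm_div] at h
          calc |Real.log (‖z‖ ^ 2)| * |g (z, t / z) - g (z, 0)|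
              ≤ |Real.log (‖z‖ ^ 2)| * (L * (‖t‖ / ‖z‖)) :=
                mul_le_mul_of_nonneg_left hgd (abs_nonneg _)
            _ = |Real.log (‖z‖ ^ 2)| * (L * ‖t‖ / ‖z‖) := by
                rw [mul_div_assoc]
      _ ≤ ∫ z : ℂ, (Set.Icc s 1).indicator
            (fun y => |Real.log (y ^ 2)| * (L * ‖t‖ / y)) (‖z‖) := by
          refine setIntegral_le_integral hPhi1 (Filter.Eventually.of_forall fun z => ?_)
          refine Set.indicator_nonneg (fun y hy => ?_) _
          exact mul_nonneg (abs_nonneg _) (div_nonneg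
            (mul_nonneg hL0 (norm_nonneg t)) (le_trans hs0.le hy.1))
      _ = 2 * Real.pi * ∫ y in Set.Ioi (0:ℝ), y * (Set.Icc s 1).indicator
            (fun y => |Real.log (y ^ 2)| * (L * ‖t‖ / y)) y :=
          radial_integral _
      _ ≤ 2 * Real.pi * (R * (L * ‖t‖) * (1 - s)) :=
          mul_le_mul_of_nonneg_left hf1.2 (by positivity)
  -- bound the second term
  have hYle : |∫ z in S, Real.log (‖z‖ ^ 2) * g (z, 0)| ≤
      2 * Real.pi * (2 * B * (s * (-Real.log s) + s) * (s - 0)) := by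
    calc |∫ z in S, Real.log (‖z‖ ^ 2) * g (z, 0)|
        ≤ ∫ z in S, |Real.log (‖z‖ ^ 2) * g (z, 0)| := by
          simpa only [Real.norm_eq_abs] using norm_integral_le_integral_norm
            (μ := volume.restrict S) (fun z : ℂ => Real.log (‖z‖ ^ 2) * g (z, 0))
      _ ≤ ∫ z in S, (Set.Ioc (0:ℝ) s).indicator
            (fun y => B * |Real.log (y ^ 2)|) (‖z‖) := by
          refine setIntegral_mono_on hh0S.abs hPhi2.integrableOn hSm ?_
          intro z hz
          have hmem : ‖z‖ ∈ Set.Ioc (0:ℝ) s := ⟨hz.1, hz.2.le⟩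
          rw [Set.indicator_of_mem hmem, abs_mul]
          calc |Real.log (‖z‖ ^ 2)| * |g (z, 0)|
              ≤ |Real.log (‖z‖ ^ 2)| * B :=
                mul_le_mul_of_nonneg_left (hB z 0) (abs_nonneg _)
            _ = B * |Real.log (‖z‖ ^ 2)| := mul_comm _ _
      _ ≤ ∫ z : ℂ, (Set.Ioc (0:ℝ) s).indicator
            (fun y => B * |Real.log (y ^ 2)|) (‖z‖) := by
          refine setIntegral_le_integral hPhi2 (Filter.Eventually.of_forall fun z => ?_)
          exact Set.indicator_nonneg (fun y _ => mul_nonneg hB0 (abs_nonneg _)) _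
      _ = 2 * Real.pi * ∫ y in Set.Ioi (0:ℝ), y * (Set.Ioc (0:ℝ) s).indicator
            (fun y => B * |Real.log (y ^ 2)|) y := radial_integral _
      _ ≤ 2 * Real.pi * (2 * B * (s * (-Real.log s) + s) * (s - 0)) :=
          mul_le_mul_of_nonneg_left hf2.2 (by positivity)
  -- combine
  have habs : |(∫ z in A, (Real.log (‖z‖ ^ 2) * g (z, t / z) -
      Real.log (‖z‖ ^ 2) * g (z, 0))) -
      ∫ z in S, Real.log (‖z‖ ^ 2) * g (z, 0)| ≤
      |∫ z in A, (Real.log (‖z‖ ^ 2) * g (z, t / z) -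
        Real.log (‖z‖ ^ 2) * g (z, 0))| +
      |∫ z in S, Real.log (‖z‖ ^ 2) * g (z, 0)| := abs_sub _ _
  refine le_trans habs (le_trans (add_le_add hXle hYle) ?_)
  -- final numeric estimate
  have hterm2 : 2 * Real.pi * (2 * B * (s * (-Real.log s) + s) * (s - 0)) =
      2 * Real.pi * B * (‖t‖ * R) + 4 * Real.pi * B * ‖t‖ := by
    rw [hnegs]
    calc 2 * Real.pi * (2 * B * (s * (R / 2) + s) * (s - 0)) =
        2 * Real.pi * B * (s ^ 2 * R) + 4 * Real.pi * B * s ^ 2 := by ring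
      _ = 2 * Real.pi * B * (‖t‖ * R) + 4 * Real.pi * B * ‖t‖ := by
        rw [hss]
  rw [hterm2]
  have hterm1 : 2 * Real.pi * (R * (L * ‖t‖) * (1 - s)) ≤
      2 * Real.pi * (R * (L * ‖t‖)) := by
    have hnn : 0 ≤ Real.pi * (R * (L * ‖t‖)) * s :=
      mul_nonneg (mul_nonneg Real.pi_pos.le
        (mul_nonneg hR0 (mul_nonneg hL0 (norm_nonneg t)))) hs0.le
    nlinarith
  refine le_trans (add_le_add_left hterm1 _) ?_
  have h1 : 0 ≤ Real.pi * L * ‖t‖ :=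
    mul_nonneg (mul_nonneg Real.pi_pos.le hL0) (norm_nonneg t)
  have h2 : 0 ≤ Real.pi * B * (‖t‖ * R) :=
    mul_nonneg (mul_nonneg Real.pi_pos.le hB0)
      (mul_nonneg (norm_nonneg t) hR0)
  nlinarith
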